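/- For every admissible u, the functional φ2 can be rewritten in center-of-mass coordinates for the triple (p1,k1,k2) as φ2(u) = (m/(1+m)) Re ∫_{ℝ¹²} conj(u((1+m)P/(1+2m) − q2, p, q2 + mP/(1+2m))) u((1+m)P/(1+2m) − q1, p, q1 + mP/(1+2m)) / ( |q1|² + |q2|² + (2m/(1+m)) q1·q2 + (m/((1+m)(1+2m)))|P|² + (m/(1+m))|p|² + (m/(1+m))μ ) dP dq1 dq2 dp. -/

import Mathlib

open MeasureTheory Real
open scoped RealInnerProductSpace

noncomputable section

abbrev V3 : Type := EuclideanSpace ℝ (Fin 3)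

def h0 (m : ℝ) (p1 p2 k1 k2 : V3) : ℝ :=
  ‖p1‖ ^ 2 + ‖p2‖ ^ 2 + (1 / m) * (‖k1‖ ^ 2 + ‖k2‖ ^ 2)

def phi2Integrand (m μ : ℝ) (u : V3 → V3 → V3 → ℂ) (x : V3 × V3 × V3 × V3) : ℂ :=
  (starRingEnd ℂ) (u (x.1 + x.2.2.1) x.2.1 x.2.2.2) * u (x.1 + x.2.2.2) x.2.1 x.2.2.1 /
    ((h0 m x.1 x.2.1 x.2.2.1 x.2.2.2 + μ : ℝ) : ℂ)

def phi2 (m μ : ℝ) (u : V3 → V3 → V3 → ℂ) : ℝ :=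
  (∫ x : V3 × V3 × V3 × V3, phi2Integrand m μ u x).re

-- instances to help typeclass search on products
instance iV0 : SFinite (volume : Measure V3) := inferInstance
instance iV1 : MeasurableAdd V3 := inferInstance
instance iV2 : (volume : Measure V3).IsAddRightInvariant := inferInstance
instance iB2 : BorelSpace (V3 × V3) := inferInstance
instance iB3 : BorelSpace (V3 × V3 × V3) := inferInstance
instance iB4 : BorelSpace (V3 × V3 × V3 × V3) := inferInstance
instance iP2b : MeasurableAdd (V3 × V3) := inferInstance
instance iP2s : SFinite (volume : Measure (V3 × V3)) := inferInstance
instance iP2c : (volume : Measure (V3 × V3)).IsAddRightInvariant :=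
  inferInstanceAs (((volume : Measure V3).prod volume).IsAddRightInvariant)
instance iP3b : MeasurableAdd (V3 × V3 × V3) := inferInstance
instance iP3s : SFinite (volume : Measure (V3 × V3 × V3)) := inferInstance
instance iP3c : (volume : Measure (V3 × V3 × V3)).IsAddRightInvariant :=
  inferInstanceAs (((volume : Measure V3).prod volume).IsAddRightInvariant)
instance iSB1 : StandardBorelSpace V3 := inferInstance
instance iSB2 : StandardBorelSpace (V3 × V3) := inferInstance
instance iSB3 : StandardBorelSpace (V3 × V3 × V3) := inferInstance
instance iSB4 : StandardBorelSpace (V3 × V3 × V3 × V3) := inferInstance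

/-- The center-of-mass change of variables. -/
def Tmap (m : ℝ) (x : V3 × V3 × V3 × V3) : V3 × V3 × V3 × V3 :=
  ((1 / (1 + 2 * m)) • x.1 - x.2.1 - x.2.2.1, x.2.2.2,
   x.2.1 + (m / (1 + 2 * m)) • x.1, x.2.2.1 + (m / (1 + 2 * m)) • x.1)

lemma Tmap_measurePreserving (m : ℝ) (hm : 0 < m) :
    MeasurePreserving (Tmap m) (volume : Measure (V3 × V3 × V3 × V3)) volume := by
  have h2m : (1 : ℝ) + 2 * m ≠ 0 := by positivity
  set a : ℝ := m / (1 + 2 * m) with ha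
  -- step 1 : shear (P, q1, q2, p) ↦ (P, (q1,q2,p) + (a•P, a•P, 0))
  have hf1 : MeasurePreserving
      (fun x : V3 × (V3 × V3 × V3) => (x.1, x.2 + (a • x.1, a • x.1, (0 : V3))))
      (volume : Measure (V3 × (V3 × V3 × V3))) volume := by
    rw [Measure.volume_eq_prod]
    have hmeas1 : Measurable (Function.uncurry fun (P : V3) (y : V3 × V3 × V3) =>
        y + (a • P, a • P, (0 : V3))) :=
      (continuous_snd.add ((continuous_fst.const_smul a).prodMk
        ((continuous_fst.const_smul a).prodMk continuous_const))).measurable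
    exact (MeasurePreserving.id volume).skew_product hmeas1
      (Filter.Eventually.of_forall fun P =>
        (measurePreserving_add_right (volume : Measure (V3 × V3 × V3)) _).map_eq)
  -- swap
  have hsw1 : MeasurePreserving (Prod.swap : V3 × (V3 × V3 × V3) → (V3 × V3 × V3) × V3)
      volume volume := by
    rw [Measure.volume_eq_prod, Measure.volume_eq_prod]; exact Measure.measurePreserving_swap
  have hsw2 : MeasurePreserving (Prod.swap : (V3 × V3 × V3) × V3 → V3 × (V3 × V3 × V3))
      volume volume := by
    rw [Measure.volume_eq_prod, Measure.volume_eq_prod]; exact Measure.measurePreserving_swap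
  -- step 2 : shear (w, P) ↦ (w, P + (-w.1 - w.2.1))
  have hs : MeasurePreserving
      (fun z : (V3 × V3 × V3) × V3 => (z.1, z.2 + (-z.1.1 - z.1.2.1)))
      (volume : Measure ((V3 × V3 × V3) × V3)) volume := by
    rw [Measure.volume_eq_prod]
    have hmeas2 : Measurable (Function.uncurry fun (w : V3 × V3 × V3) (y : V3) =>
        y + (-w.1 - w.2.1)) :=
      (continuous_snd.add ((continuous_fst.fst.neg).sub continuous_fst.snd.fst)).measurable
    exact (MeasurePreserving.id volume).skew_product hmeas2
      (Filter.Eventually.of_forall fun w =>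
        (measurePreserving_add_right (volume : Measure V3) _).map_eq)
  -- step 3 : permutation of the last three coordinates
  have hperm : MeasurePreserving
      (fun w : V3 × V3 × V3 => ((w.2.2, w.1, w.2.1) : V3 × V3 × V3)) volume volume := by
    have h1 := (MeasureTheory.measurePreserving_prodAssoc
      (volume : Measure V3) volume volume).symm
      (MeasurableEquiv.prodAssoc : (V3 × V3) × V3 ≃ᵐ V3 × V3 × V3)
    have h2 : MeasurePreserving (Prod.swap : (V3 × V3) × V3 → V3 × (V3 × V3))
        volume volume := by
      rw [Measure.volume_eq_prod, Measure.volume_eq_prod]; exact Measure.measurePreserving_swap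
    have h3 : MeasurePreserving
        (fun w : V3 × (V3 × V3) => ((w.1, w.2.1), w.2.2) : V3 × (V3 × V3) → (V3 × V3) × V3)
        volume volume := h1
    exact h2.comp h3
  have hf3 : MeasurePreserving
      (fun y : V3 × (V3 × V3 × V3) => ((y.1, y.2.2.2, y.2.1, y.2.2.1) : V3 × V3 × V3 × V3))
      volume volume := by
    have := ((MeasurePreserving.id (volume : Measure V3)).prod hperm)
    rw [Measure.volume_eq_prod V3 (V3 × V3 × V3)]
    exact this
  have hcomp := (hf3.comp ((hsw2.comp (hs.comp hsw1)).comp hf1))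
  have heq : Tmap m = (fun y : V3 × (V3 × V3 × V3) =>
        ((y.1, y.2.2.2, y.2.1, y.2.2.1) : V3 × V3 × V3 × V3)) ∘
      ((Prod.swap : (V3 × V3 × V3) × V3 → V3 × (V3 × V3 × V3)) ∘
        ((fun z : (V3 × V3 × V3) × V3 => (z.1, z.2 + (-z.1.1 - z.1.2.1))) ∘
          (Prod.swap : V3 × (V3 × V3 × V3) → (V3 × V3 × V3) × V3)) ∘
      (fun x : V3 × (V3 × V3 × V3) => (x.1, x.2 + (a • x.1, a • x.1, (0 : V3))))) := by
    funext x
    obtain ⟨P, q1, q2, p⟩ := x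
    simp only [Function.comp_apply, Prod.swap_prod_mk, Prod.mk_add_mk, Tmap]
    refine Prod.ext ?_ (Prod.ext (add_zero p).symm (Prod.ext rfl rfl))
    show (1 / (1 + 2 * m)) • P - q1 - q2 = P + (-(q1 + a • P) - (q2 + a • P))
    match_scalars <;> (try simp only [ha]) <;> (try field_simp) <;> (try ring)
  rw [heq]
  exact hcomp

lemma Tmap_injective (m : ℝ) (hm : 0 < m) : Function.Injective (Tmap m) := by
  have h2m : (1 : ℝ) + 2 * m ≠ 0 := by positivity
  have hleft : Function.LeftInverse (fun y : V3 × V3 × V3 × V3 =>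
      ((y.1 + y.2.2.1 + y.2.2.2 : V3),
       y.2.2.1 - (m / (1 + 2 * m)) • (y.1 + y.2.2.1 + y.2.2.2),
       y.2.2.2 - (m / (1 + 2 * m)) • (y.1 + y.2.2.1 + y.2.2.2), y.2.1)) (Tmap m) := by
    intro x
    obtain ⟨P, q1, q2, p⟩ := x
    simp only [Tmap]
    refine Prod.ext ?_ (Prod.ext ?_ (Prod.ext ?_ rfl)) <;> simp only <;>
      match_scalars <;> (try field_simp) <;> (try ring)
  exact hleft.injective

lemma hden_eq (m μ : ℝ) (hm : 0 < m) (P q1 q2 p : V3) :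
    h0 m ((1 / (1 + 2 * m)) • P - q1 - q2) p (q1 + (m / (1 + 2 * m)) • P)
        (q2 + (m / (1 + 2 * m)) • P) + μ
      = ((1 + m) / m) *
        (‖q1‖ ^ 2 + ‖q2‖ ^ 2 + (2 * m / (1 + m)) * ⟪q1, q2⟫ +
          (m / ((1 + m) * (1 + 2 * m))) * ‖P‖ ^ 2 +
          (m / (1 + m)) * ‖p‖ ^ 2 + (m / (1 + m)) * μ) := by
  have h2m : (1 : ℝ) + 2 * m ≠ 0 := by positivity
  have h1m : (1 : ℝ) + m ≠ 0 := by positivity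
  have hm0 : m ≠ 0 := ne_of_gt hm
  simp only [h0, ← real_inner_self_eq_norm_sq]
  simp only [inner_sub_left, inner_sub_right, inner_add_left, inner_add_right,
    real_inner_smul_left, real_inner_smul_right]
  simp only [real_inner_comm q2 q1, real_inner_comm q1 P, real_inner_comm q2 P]
  field_simp
  ring


/-- rewriting `φ2` in center-of-mass coordinates of the triple `(p1,k1,k2)`.
The integration variables are `(P, q1, q2, p)`. -/
theorem phi2_center_of_mass (m μ : ℝ) (hm : 0 < m) (hμ : 0 < μ)
    (u : V3 → V3 → V3 → ℂ)
    (huL2 : MemLp (fun x : V3 × V3 × V3 => u x.1 x.2.1 x.2.2) 2 volume)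
    (huInt : Integrable (phi2Integrand m μ u)) :
    phi2 m μ u =
      m / (1 + m) *
        (∫ x : V3 × V3 × V3 × V3,
          (starRingEnd ℂ)
              (u (((1 + m) / (1 + 2 * m)) • x.1 - x.2.2.1) x.2.2.2
                (x.2.2.1 + (m / (1 + 2 * m)) • x.1)) *
            u (((1 + m) / (1 + 2 * m)) • x.1 - x.2.1) x.2.2.2
              (x.2.1 + (m / (1 + 2 * m)) • x.1) /
            ((‖x.2.1‖ ^ 2 + ‖x.2.2.1‖ ^ 2 + (2 * m / (1 + m)) * ⟪x.2.1, x.2.2.1⟫ +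
                (m / ((1 + m) * (1 + 2 * m))) * ‖x.1‖ ^ 2 +
                (m / (1 + m)) * ‖x.2.2.2‖ ^ 2 + (m / (1 + m)) * μ : ℝ) : ℂ)).re := by
  have h2m : (1 : ℝ) + 2 * m ≠ 0 := by positivity
  have hT := Tmap_measurePreserving m hm
  have hemb : MeasurableEmbedding (Tmap m) :=
    hT.measurable.measurableEmbedding (Tmap_injective m hm)
  have hint := hT.integral_comp hemb (phi2Integrand m μ u)
  have hconst : (((1 + m) / m : ℝ) : ℂ)⁻¹ = ((m / (1 + m) : ℝ) : ℂ) := by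
    rw [← Complex.ofReal_inv, inv_div]
  have key : ∀ x : V3 × V3 × V3 × V3, phi2Integrand m μ u (Tmap m x)
      = ((m / (1 + m) : ℝ) : ℂ) *
        ((starRingEnd ℂ)
              (u (((1 + m) / (1 + 2 * m)) • x.1 - x.2.2.1) x.2.2.2
                (x.2.2.1 + (m / (1 + 2 * m)) • x.1)) *
            u (((1 + m) / (1 + 2 * m)) • x.1 - x.2.1) x.2.2.2
              (x.2.1 + (m / (1 + 2 * m)) • x.1) /
            ((‖x.2.1‖ ^ 2 + ‖x.2.2.1‖ ^ 2 + (2 * m / (1 + m)) * ⟪x.2.1, x.2.2.1⟫ +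
                (m / ((1 + m) * (1 + 2 * m))) * ‖x.1‖ ^ 2 +
                (m / (1 + m)) * ‖x.2.2.2‖ ^ 2 + (m / (1 + m)) * μ : ℝ) : ℂ)) := by
    intro x
    obtain ⟨P, q1, q2, p⟩ := x
    have harg1 : (1 / (1 + 2 * m)) • P - q1 - q2 + (q1 + (m / (1 + 2 * m)) • P)
        = ((1 + m) / (1 + 2 * m)) • P - q2 := by
      match_scalars <;> (try field_simp) <;> (try ring)
    have harg2 : (1 / (1 + 2 * m)) • P - q1 - q2 + (q2 + (m / (1 + 2 * m)) • P)
        = ((1 + m) / (1 + 2 * m)) • P - q1 := by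
      match_scalars <;> (try field_simp) <;> (try ring)
    simp only [phi2Integrand, Tmap]
    rw [harg1, harg2, hden_eq m μ hm P q1 q2 p, Complex.ofReal_mul,
      mul_comm (((1 + m) / m : ℝ) : ℂ), ← div_div, div_eq_inv_mul, hconst]
  rw [phi2, ← hint]
  simp only [key]
  rw [MeasureTheory.integral_const_mul, Complex.re_ofReal_mul]


end
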